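/- Let P and Q be forcing notions and κ a regular cardinal with κ ≥ ℵ*(P) (the Lindenbaum number of the set of conditions of P). If Q is κ-descending distributive, then the product forcing P × Q (ordered componentwise) is κ-descending distributive. -/

import Mathlib

universe u

/-- A subset `D` of a forcing notion is *open dense* if it is downward closed and
for every condition `p` there is `q ∈ D` with `q ≤ p`. -/
def IsOpenDense {P : Type*} [Preorder P] (D : Set P) : Prop :=
  (∀ p ∈ D, ∀ q, q ≤ p → q ∈ D) ∧ ∀ p : P, ∃ q ∈ D, q ≤ p

/-- A forcing notion `P` is `κ`-descending distributive if for every decreasing sequence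
`(D_α)_{α<κ}` of open dense subsets, the intersection `⋂_{α<κ} D_α` is open dense. -/
def DescDist (P : Type*) [Preorder P] (κ : Cardinal) : Prop :=
  ∀ D : Ordinal → Set P,
    (∀ α, α < κ.ord → IsOpenDense (D α)) →
    (∀ α β : Ordinal, α ≤ β → β < κ.ord → D β ⊆ D α) →
    IsOpenDense (⋂ α ∈ Set.Iio κ.ord, D α)

/-- The Lindenbaum number `ℵ*(X)`: the least ordinal `α` such that `|α| ≤* |X|` fails,
i.e. such that `α ≠ 0` and there is no surjection from `X` onto `α`. -/
noncomputable def lindenbaumOrd (X : Type u) : Ordinal.{u} :=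
  sInf {α : Ordinal.{u} | ¬ (α = 0 ∨ ∃ f : X → α.ToType, Function.Surjective f)}

/-!
Given a decreasing sequence `(D_α)_{α<κ}` of open dense subsets of `P × Q` and a condition
`(p₀, q₀)`, the sets `{q | ∃ p ≤ p₀, (p, q) ∈ D_α}` form a decreasing sequence of open dense
subsets of `Q`, so by distributivity of `Q` a single `q ≤ q₀` lies in all of them, witnessed by
some `p_α ≤ p₀` for each `α`. Since `|P| < ℵ*(P) ≤ κ = cf κ`, one `p` equals `p_α` for cofinally
many `α`, and as the `D_α` decrease, `(p, q)` lies in every `D_α`.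
-/

open Cardinal Set

theorem Ordinal.exists_surjective_toType_iff {X : Type u} {α : Ordinal.{u}} (hα : α ≠ 0) :
    (∃ f : X → α.ToType, Function.Surjective f) ↔ α.card ≤ #X := by
  have : Nonempty α.ToType := Ordinal.nonempty_toType_iff.mpr hα
  rw [Function.exists_surjective_iff, ← Cardinal.le_def, Cardinal.mk_toType]
  simp [hα]

theorem lindenbaumOrd_eq_sInf (X : Type u) : lindenbaumOrd X = sInf {α | #X < α.card} := by
  unfold lindenbaumOrd
  congr 1
  ext α
  rcases eq_or_ne α 0 with rfl | hα
  · simp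
  · simp only [mem_ofPred_eq, hα, false_or, Ordinal.exists_surjective_toType_iff hα, not_le]

theorem mk_lt_card_lindenbaumOrd (X : Type u) : #X < (lindenbaumOrd X).card := by
  rw [lindenbaumOrd_eq_sInf]
  exact csInf_mem (s := {α | #X < α.card}) ⟨(Order.succ #X).ord, by simp⟩

theorem Ordinal.exists_cofinal_fiber_of_mk_lt_cof {X : Type u} {o : Ordinal.{u}}
    (hX : #X < o.cof) (f : Iio o → X) : ∃ x, ∀ β < o, ∃ α : Iio o, β ≤ α ∧ f α = x := by
  by_contra! h
  choose g hg using h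
  have hsup : ⨆ x, g x < o := Ordinal.iSup_lt_of_lt_cof hX fun x => (hg x).1
  set α : Iio o := ⟨⨆ x, g x, hsup⟩
  exact (hg (f α)).2 α (Ordinal.le_iSup g (f α)) rfl

section Product

variable {P Q : Type*}

def fiberBelow [LE P] (D : Set (P × Q)) (p₀ : P) : Set Q :=
  {q | ∃ p ≤ p₀, (p, q) ∈ D}

theorem fiberBelow_mono [LE P] {D D' : Set (P × Q)} (h : D ⊆ D') (p₀ : P) :
    fiberBelow D p₀ ⊆ fiberBelow D' p₀ :=
  fun _ ⟨p, hp, hpq⟩ => ⟨p, hp, h hpq⟩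

theorem IsOpenDense.fiberBelow [Preorder P] [Preorder Q] {D : Set (P × Q)} (hD : IsOpenDense D)
    (p₀ : P) : IsOpenDense (fiberBelow D p₀) := by
  refine ⟨fun q ⟨p, hp, hpq⟩ q' hq' => ⟨p, hp, hD.1 _ hpq (p, q') ⟨le_rfl, hq'⟩⟩, fun q => ?_⟩
  obtain ⟨⟨p', q'⟩, hmem, hp', hq'⟩ := hD.2 (p₀, q)
  exact ⟨q', ⟨p', hp', hmem⟩, hq'⟩

theorem DescDist.prod_of_mk_lt_cof {P : Type u} [Preorder P] [Preorder Q] {κ : Cardinal.{u}}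
    (hP : #P < κ.ord.cof) (hQ : DescDist Q κ) : DescDist (P × Q) κ := by
  intro D hD hanti
  refine ⟨fun x hx y hyx => ?_, fun ⟨p₀, q₀⟩ => ?_⟩
  · simp only [mem_iInter] at hx ⊢
    exact fun α hα => (hD α hα).1 x (hx α hα) y hyx
  obtain ⟨q, hq, hqq₀⟩ := (hQ (fun α => fiberBelow (D α) p₀) (fun α hα => (hD α hα).fiberBelow p₀)
    fun α β hαβ hβ => fiberBelow_mono (hanti α β hαβ hβ) p₀).2 q₀
  have hfiber (α : Iio κ.ord) : ∃ p ≤ p₀, (p, q) ∈ D α := mem_iInter₂.1 hq α α.2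
  choose f hfp₀ hfD using hfiber
  obtain ⟨p, hp⟩ := Ordinal.exists_cofinal_fiber_of_mk_lt_cof hP f
  have hκpos : 0 < κ.ord := pos_iff_ne_zero.2 fun h => by simp [h] at hP
  obtain ⟨α₀, -, rfl⟩ := hp 0 hκpos
  refine ⟨(f α₀, q), mem_iInter₂.2 fun β hβ => ?_, hfp₀ α₀, hqq₀⟩
  obtain ⟨α, hβα, hα⟩ := hp β hβ
  exact hanti β α hβα α.2 (hα ▸ hfD α)

end Product

theorem statement11_general {P Q : Type u} [PartialOrder P]
    [PartialOrder Q]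
    (κ : Cardinal.{u}) (hκ : κ.IsRegular) (hP : (lindenbaumOrd P).card ≤ κ)
    (hQ : DescDist Q κ) :
    DescDist (P × Q) κ :=
  DescDist.prod_of_mk_lt_cof ((mk_lt_card_lindenbaumOrd P).trans_le (hP.trans hκ.le_cof_ord)) hQ

/-- If `κ` is regular, `κ ≥ ℵ*(P)`, and `Q` is `κ`-descending distributive, then the
product forcing `P × Q` is `κ`-descending distributive. -/
theorem statement11 {P Q : Type u} [PartialOrder P] [OrderTop P]
    [PartialOrder Q] [OrderTop Q]
    (κ : Cardinal.{u}) (hκ : κ.IsRegular) (hP : (lindenbaumOrd P).card ≤ κ)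
    (hQ : DescDist Q κ) :
    DescDist (P × Q) κ :=
  statement11_general κ hκ hP hQ
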